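/- Define L(n, m) = Σ_{k=m}^{n} (−1)^(n−k) · qbinom(k, m) · S₁^q(n, k) · q^(−k), where qbinom is the Gaussian binomial coefficient and S₁^q the q-Stirling numbers of the first kind. Then for all n ≥ m ≥ 0: L(n, m) + (q(q^{m+1} − q^m + q^n − 1)/(q − 1)) · L(n, m+1) − q · L(n+1, m+1) = 0. -/

import Mathlib

/-- The indeterminate q in the field ℚ(q). -/
noncomputable def q : RatFunc ℚ := RatFunc.X

/-- The q-integer [m]_q = 1 + q + ⋯ + q^(m-1). -/
noncomputable def qnat (m : ℕ) : RatFunc ℚ := ∑ i ∈ Finset.range m, q ^ i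

/-- The Gaussian binomial coefficient [k choose m]_q = [k]⋯[k-m+1] / ([m]⋯[1]). -/
noncomputable def qbinom (k m : ℕ) : RatFunc ℚ :=
  (∏ i ∈ Finset.range m, qnat (k - i)) / ∏ i ∈ Finset.range m, qnat (i + 1)

/-- q-Stirling numbers of the first kind:
    S₁^q(n, k) = S₁^q(n-1, k-1) - [n-1]_q · S₁^q(n-1, k), S₁^q(0, k) = δ₀ₖ. -/
noncomputable def S1q : ℕ → ℕ → RatFunc ℚ
  | 0, 0 => 1
  | 0, _ + 1 => 0
  | n + 1, 0 => -qnat n * S1q n 0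
  | n + 1, k + 1 => S1q n k - qnat n * S1q n (k + 1)

/-- L(n, m) = Σ_{k=m}^{n} (−1)^(n−k) · qbinom(k, m) · S₁^q(n, k) · q^(−k). -/
noncomputable def L (n m : ℕ) : RatFunc ℚ :=
  ∑ k ∈ Finset.Icc m n, (-1 : RatFunc ℚ) ^ (n - k) * qbinom k m * S1q n k * (q ^ k)⁻¹

lemma q_ne_zero : q ≠ 0 := RatFunc.X_ne_zero

lemma qnat_zero : qnat 0 = 0 := by simp [qnat]

lemma qnat_ne_zero (m : ℕ) (hm : m ≠ 0) : qnat m ≠ 0 := by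
  have hrw : qnat m
      = algebraMap (Polynomial ℚ) (RatFunc ℚ) (∑ i ∈ Finset.range m, Polynomial.X ^ i) := by
    simp [qnat, q, map_sum, map_pow, RatFunc.algebraMap_X]
  rw [hrw]
  apply RatFunc.algebraMap_ne_zero
  intro hcon
  have h2 := congrArg (Polynomial.eval 1) hcon
  simp [Polynomial.eval_finset_sum] at h2
  exact hm h2

lemma q_sub_one_ne_zero : q - 1 ≠ 0 := by
  have hrw : q - 1 = algebraMap (Polynomial ℚ) (RatFunc ℚ) (Polynomial.X - 1) := by
    simp [q, RatFunc.algebraMap_X]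
  rw [hrw]
  apply RatFunc.algebraMap_ne_zero
  intro hcon
  have h2 := congrArg (Polynomial.eval 0) hcon
  simp at h2

lemma qnat_mul_q_sub_one (n : ℕ) : qnat n * (q - 1) = q ^ n - 1 := by
  simpa [qnat] using geom_sum_mul q n

lemma S1q_eq_zero {n k : ℕ} (h : n < k) : S1q n k = 0 := by
  induction n generalizing k with
  | zero =>
    obtain ⟨j, rfl⟩ := Nat.exists_eq_add_of_lt h
    simp [S1q]
  | succ n ih =>
    obtain ⟨j, rfl⟩ : ∃ j, k = j + 1 := ⟨k - 1, by omega⟩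
    rw [show S1q (n + 1) (j + 1) = S1q n j - qnat n * S1q n (j + 1) from rfl,
      ih (by omega), ih (by omega)]
    ring

lemma qbinom_self_succ (m : ℕ) : qbinom m (m + 1) = 0 := by
  unfold qbinom
  rw [Finset.prod_eq_zero (Finset.self_mem_range_succ m) (by simp [qnat_zero]), zero_div]

lemma qnat_split {m k : ℕ} (h : m ≤ k) :
    qnat (k + 1) = qnat (m + 1) + q ^ (m + 1) * qnat (k - m) := by
  rw [show k + 1 = (m + 1) + (k - m) by omega]
  simp [qnat, Finset.sum_range_add, pow_add, Finset.mul_sum]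

lemma pascal {m k : ℕ} (h : m ≤ k) :
    qbinom (k + 1) (m + 1) = qbinom k m + q ^ (m + 1) * qbinom k (m + 1) := by
  unfold qbinom
  have hnum1 : ∏ i ∈ Finset.range (m + 1), qnat (k + 1 - i)
      = (∏ i ∈ Finset.range m, qnat (k - i)) * qnat (k + 1) := by
    rw [Finset.prod_range_succ']
    simp [Nat.succ_sub_succ]
  have hnum2 : ∏ i ∈ Finset.range (m + 1), qnat (k - i)
      = (∏ i ∈ Finset.range m, qnat (k - i)) * qnat (k - m) := Finset.prod_range_succ _ _
  have hden : ∏ i ∈ Finset.range (m + 1), qnat (i + 1)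
      = (∏ i ∈ Finset.range m, qnat (i + 1)) * qnat (m + 1) := Finset.prod_range_succ _ _
  rw [hnum1, hnum2, hden]
  have hD : (∏ i ∈ Finset.range m, qnat (i + 1)) ≠ 0 :=
    Finset.prod_ne_zero_iff.2 fun i _ => qnat_ne_zero _ (by omega)
  have hm1 : qnat (m + 1) ≠ 0 := qnat_ne_zero _ (by omega)
  rw [qnat_split h]
  field_simp

lemma key (n m : ℕ) (h : m ≤ n) :
    q * L (n + 1) (m + 1) = L n m + (q ^ (m + 1) + q * qnat n) * L n (m + 1) := by
  have hmap : Finset.Icc (m + 1) (n + 1) = (Finset.Icc m n).map (addRightEmbedding 1) := by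
    rw [Finset.map_add_right_Icc]
  have step1 : q * L (n + 1) (m + 1) = ∑ k ∈ Finset.Icc m n,
      ((-1 : RatFunc ℚ) ^ (n + 1 - (k + 1)) * qbinom (k + 1) (m + 1) * S1q (n + 1) (k + 1)
        * (q ^ (k + 1))⁻¹) * q := by
    rw [L, hmap, Finset.sum_map, Finset.mul_sum]
    refine Finset.sum_congr rfl fun k _ => ?_
    simp [addRightEmbedding]
    ring
  have step2 : ∀ k ∈ Finset.Icc m n,
      ((-1 : RatFunc ℚ) ^ (n + 1 - (k + 1)) * qbinom (k + 1) (m + 1) * S1q (n + 1) (k + 1)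
        * (q ^ (k + 1))⁻¹) * q
      = (-1 : RatFunc ℚ) ^ (n - k) * qbinom k m * S1q n k * (q ^ k)⁻¹
        + q ^ (m + 1) * ((-1 : RatFunc ℚ) ^ (n - k) * qbinom k (m + 1) * S1q n k * (q ^ k)⁻¹)
        - q * qnat n *
          ((-1 : RatFunc ℚ) ^ (n - k) * qbinom (k + 1) (m + 1) * S1q n (k + 1)
            * (q ^ (k + 1))⁻¹) := by
    intro k hk
    rw [Finset.mem_Icc] at hk
    rw [Nat.succ_sub_succ, pascal hk.1,
      show S1q (n + 1) (k + 1) = S1q n k - qnat n * S1q n (k + 1) from rfl]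
    have hq : q ≠ 0 := q_ne_zero
    field_simp
    ring
  rw [step1, Finset.sum_congr rfl step2]
  rw [Finset.sum_sub_distrib, Finset.sum_add_distrib, ← Finset.mul_sum, ← Finset.mul_sum]
  have hS2 : ∑ k ∈ Finset.Icc m n,
      (-1 : RatFunc ℚ) ^ (n - k) * qbinom k (m + 1) * S1q n k * (q ^ k)⁻¹ = L n (m + 1) := by
    rw [show Finset.Icc m n = (Finset.Ico (m + 1) (n + 1)).cons m (by simp) from by
      ext x; simp [Finset.mem_Icc, Finset.mem_Ico, Finset.mem_cons]; omega]
    rw [Finset.sum_cons, qbinom_self_succ, Finset.Ico_add_one_right_eq_Icc, L]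
    ring
  have hS3 : ∑ k ∈ Finset.Icc m n,
      (-1 : RatFunc ℚ) ^ (n - k) * qbinom (k + 1) (m + 1) * S1q n (k + 1) * (q ^ (k + 1))⁻¹
      = - L n (m + 1) := by
    rw [Finset.Icc_eq_cons_Ico h, Finset.sum_cons, S1q_eq_zero (by omega)]
    have hmap2 : Finset.Icc (m + 1) n = (Finset.Ico m n).map (addRightEmbedding 1) := by
      rw [Finset.map_add_right_Ico, Finset.Ico_add_one_right_eq_Icc]
    rw [L, hmap2, Finset.sum_map, ← Finset.sum_neg_distrib]
    simp only [addRightEmbedding, Function.Embedding.coeFn_mk]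
    rw [show ((-1 : RatFunc ℚ) ^ (n - n) * qbinom (n + 1) (m + 1) * 0 * (q ^ (n + 1))⁻¹) = 0
      by ring, zero_add]
    refine Finset.sum_congr rfl fun k hk => ?_
    rw [Finset.mem_Ico] at hk
    rw [show n - k = (n - (k + 1)) + 1 by omega, pow_succ]
    ring
  have hS1 : ∑ x ∈ Finset.Icc m n,
      (-1 : RatFunc ℚ) ^ (n - x) * qbinom x m * S1q n x * (q ^ x)⁻¹ = L n m := rfl
  rw [hS1, hS2, hS3]
  ring

theorem stmt_13 (n m : ℕ) (h : m ≤ n) :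
    L n m + q * (q ^ (m + 1) - q ^ m + q ^ n - 1) / (q - 1) * L n (m + 1)
      - q * L (n + 1) (m + 1) = 0 := by
  have hc : q * (q ^ (m + 1) - q ^ m + q ^ n - 1) / (q - 1) = q ^ (m + 1) + q * qnat n := by
    rw [div_eq_iff q_sub_one_ne_zero]
    linear_combination (-q) * qnat_mul_q_sub_one n
  rw [hc, key n m h]
  ring
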